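/- Let S be a set, let D be a positive integer, let C : S → ℤ be a classifier and P : S → ℝ a function with 0 ≤ P(Y) ≤ 1 for all Y ∈ S, and let β : S → ℝ. Define α₁(Y) = (C(Y) + P(Y))/D, α₂(Y) = 1 − α₁(Y), F₁(Y) = α₁(Y) + β(Y), and F₂(Y) = α₂(Y) + β(Y). If Y₁, Y₂ ∈ S satisfy β(Y₁) = β(Y₂) and the Manhattan distance in objective space exceeds 4/D, i.e., |F₁(Y₁) − F₁(Y₂)| + |F₂(Y₁) − F₂(Y₂)| > 4/D, then C(Y₁) ≠ C(Y₂). -/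

import Mathlib

/-! With equal classes and equal `β`, the two objective gaps are `±(P Y₁ - P Y₂) / D`, so the
Manhattan distance is `2 |P Y₁ - P Y₂| / D ≤ 2 / D`, which cannot exceed `4 / D`. -/

lemma abs_add_div_sub_add_div_le {D : ℝ} (hD : 0 ≤ D) (k : ℝ) {p q : ℝ}
    (hp : p ∈ Set.Icc (0 : ℝ) 1) (hq : q ∈ Set.Icc (0 : ℝ) 1) :
    |(k + p) / D - (k + q) / D| ≤ 1 / D := by
  rw [← sub_div, add_sub_add_left_eq_sub, abs_div, abs_of_nonneg hD, ← Real.dist_eq]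
  exact div_le_div_of_nonneg_right (Real.dist_le_of_mem_Icc_01 hp hq) hD

lemma abs_add_sub_add_add_abs_one_sub_add_sub (a₁ a₂ b : ℝ) :
    |(a₁ + b) - (a₂ + b)| + |((1 - a₁) + b) - ((1 - a₂) + b)| = 2 * |a₁ - a₂| := by
  rw [add_sub_add_right_eq_sub, add_sub_add_right_eq_sub, sub_sub_sub_cancel_left, abs_sub_comm]
  ring

theorem manhattan_gap_implies_different_class_general
    {S : Type*}
    (D : ℕ)
    (C : S → ℤ) (P : S → ℝ) (hP : ∀ Y : S, 0 ≤ P Y ∧ P Y ≤ 1)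
    (β : S → ℝ)
    (α₁ : S → ℝ) (hα₁ : ∀ Y, α₁ Y = ((C Y : ℝ) + P Y) / D)
    (α₂ : S → ℝ) (hα₂ : ∀ Y, α₂ Y = 1 - α₁ Y)
    (F₁ : S → ℝ) (hF₁ : ∀ Y, F₁ Y = α₁ Y + β Y)
    (F₂ : S → ℝ) (hF₂ : ∀ Y, F₂ Y = α₂ Y + β Y)
    (Y₁ Y₂ : S) (hβeq : β Y₁ = β Y₂)
    (hdist : |F₁ Y₁ - F₁ Y₂| + |F₂ Y₁ - F₂ Y₂| > 4 / D) :
    C Y₁ ≠ C Y₂ := by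
  intro hC
  have hD : (0 : ℝ) ≤ D := D.cast_nonneg
  have hα : |α₁ Y₁ - α₁ Y₂| ≤ 1 / D := by
    rw [hα₁, hα₁, hC]
    exact abs_add_div_sub_add_div_le hD _ (hP Y₁) (hP Y₂)
  have hmanhattan : |F₁ Y₁ - F₁ Y₂| + |F₂ Y₁ - F₂ Y₂| = 2 * |α₁ Y₁ - α₁ Y₂| := by
    rw [hF₁, hF₁, hF₂, hF₂, hα₂, hα₂, hβeq]
    exact abs_add_sub_add_add_abs_one_sub_add_sub _ _ _
  have h24 : 2 * (1 / (D : ℝ)) ≤ 4 / D := by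
    rw [mul_one_div]
    exact div_le_div_of_nonneg_right (by norm_num) hD
  linarith

/-- If β(Y₁) = β(Y₂) and the Manhattan distance between the
objective vectors exceeds 4/D, then the class labels differ. -/
theorem manhattan_gap_implies_different_class
    {S : Type*}
    (D : ℕ) (hD : 0 < D)
    (C : S → ℤ) (P : S → ℝ) (hP : ∀ Y : S, 0 ≤ P Y ∧ P Y ≤ 1)
    (β : S → ℝ)
    (α₁ : S → ℝ) (hα₁ : ∀ Y, α₁ Y = ((C Y : ℝ) + P Y) / D)
    (α₂ : S → ℝ) (hα₂ : ∀ Y, α₂ Y = 1 - α₁ Y)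
    (F₁ : S → ℝ) (hF₁ : ∀ Y, F₁ Y = α₁ Y + β Y)
    (F₂ : S → ℝ) (hF₂ : ∀ Y, F₂ Y = α₂ Y + β Y)
    (Y₁ Y₂ : S) (hβeq : β Y₁ = β Y₂)
    (hdist : |F₁ Y₁ - F₁ Y₂| + |F₂ Y₁ - F₂ Y₂| > 4 / D) :
    C Y₁ ≠ C Y₂ :=
  manhattan_gap_implies_different_class_general D C P hP β α₁ hα₁ α₂ hα₂ F₁ hF₁ F₂ hF₂ Y₁ Y₂ hβeq
    hdist
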